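/- Let H be a Hermitian operator with negative spectrum, gap Δ ≤ E₁ − E₀, first excited energy E₁ < 0, observable O, trial overlap γ := |⟨E₀|ψ₀⟩| > 0, and error ε ≤ 4‖O‖√(1−γ²)/γ. If k ≥ (1/2) · log(2γ²ε²/(8‖O‖²(1−γ²))) / log(1 − Δ/|E₀|), then |⟨ψ₀|H^k O H^k|ψ₀⟩/‖H^k|ψ₀⟩‖² − ⟨E₀|O|E₀⟩| ≤ ε. -/

import Mathlib

/-!
Split the trial state as `ψ₀ = ⟪v, ψ₀⟫ v + w` with `w ⟂ v`. Since `H` is Hermitian, `H ^ k` keeps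
the two pieces orthogonal; it multiplies the ground component by `E₀ ^ k` and, by the gap
hypothesis (which also forces the ground state to be non-degenerate), shrinks `w` by at least
`|E₁| ^ k`. Hence the normalised iterate has overlap at least
`1 - (1 - γ²) / (2γ²) · (E₁ / E₀) ^ (2k)` with `v`. After a phase rotation, unit vectors with
overlap `1 - δ` are at distance `√(2δ)`, and the expectation values of `O` in them differ by at
most `2‖O‖` times that distance. The hypothesis on `k` makes `δ ≤ ε² / (8‖O‖²)`.
-/

open Matrix
open scoped Matrix.Norms.L2Operator

/-- Euclidean norm of a complex vector. -/
noncomputable def vecNorm {n : Type*} [Fintype n] (v : n → ℂ) : ℝ :=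
  Real.sqrt (star v ⬝ᵥ v).re

open scoped InnerProductSpace

theorem one_sub_div_le_div_sq {A B r : ℝ} (hA : 0 < A) (hB : 0 ≤ B) (hr : 0 ≤ r)
    (h : r ^ 2 = A ^ 2 + B) : 1 - A / r ≤ B / (2 * A ^ 2) := by
  have hAr : A ≤ r := by nlinarith
  have hr0 : 0 < r := hA.trans_le hAr
  rw [one_sub_div hr0.ne', div_le_div_iff₀ hr0 (by positivity)]
  nlinarith [mul_nonneg (sq_nonneg (r - A)) (by linarith : 0 ≤ r + 2 * A)]

section InnerProductSpace

variable {𝕜 E : Type*} [RCLike 𝕜] [NormedAddCommGroup E] [InnerProductSpace 𝕜 E]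

theorem norm_add_sq_of_inner_eq_zero {x y : E} (h : ⟪x, y⟫_𝕜 = 0) :
    ‖x + y‖ ^ 2 = ‖x‖ ^ 2 + ‖y‖ ^ 2 := by
  rw [norm_add_sq (𝕜 := 𝕜), h, map_zero, mul_zero, add_zero]

theorem inner_sub_inner_smul_eq_zero {v : E} (hv : ‖v‖ = 1) (x : E) :
    ⟪v, x - ⟪v, x⟫_𝕜 • v⟫_𝕜 = 0 := by
  rw [inner_sub_right, inner_smul_right, inner_self_eq_norm_sq_to_K, hv]
  simp

theorem norm_sq_eq_norm_inner_sq_add_norm_sub_sq {v : E} (hv : ‖v‖ = 1) (x : E) :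
    ‖x‖ ^ 2 = ‖⟪v, x⟫_𝕜‖ ^ 2 + ‖x - ⟪v, x⟫_𝕜 • v‖ ^ 2 := by
  conv_lhs => rw [← add_sub_cancel (⟪v, x⟫_𝕜 • v) x]
  rw [norm_add_sq_of_inner_eq_zero (by rw [inner_smul_left, inner_sub_inner_smul_eq_zero hv,
    mul_zero]), norm_smul, hv, mul_one]

theorem norm_inner_map_self_sub_le (O : E →L[𝕜] E) {x y : E} (hx : ‖x‖ = 1) (hy : ‖y‖ = 1) :
    ‖⟪x, O x⟫_𝕜 - ⟪y, O y⟫_𝕜‖ ≤ 2 * ‖O‖ * ‖x - y‖ := by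
  have hsplit : ⟪x, O x⟫_𝕜 - ⟪y, O y⟫_𝕜 = ⟪x - y, O x⟫_𝕜 + ⟪y, O (x - y)⟫_𝕜 := by
    simp only [inner_sub_left, map_sub, inner_sub_right]
    ring
  calc ‖⟪x, O x⟫_𝕜 - ⟪y, O y⟫_𝕜‖
      ≤ ‖x - y‖ * ‖O x‖ + ‖y‖ * ‖O (x - y)‖ := by
        rw [hsplit]
        exact (norm_add_le _ _).trans (add_le_add (norm_inner_le_norm _ _) (norm_inner_le_norm _ _))
    _ ≤ ‖x - y‖ * (‖O‖ * ‖x‖) + ‖y‖ * (‖O‖ * ‖x - y‖) := by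
        gcongr <;> exact O.le_opNorm _
    _ = 2 * ‖O‖ * ‖x - y‖ := by rw [hx, hy]; ring

theorem exists_norm_eq_one_inner_smul_eq_norm (x y : E) :
    ∃ c : 𝕜, ‖c‖ = 1 ∧ ⟪c • y, x⟫_𝕜 = ‖⟪y, x⟫_𝕜‖ := by
  by_cases h : ⟪y, x⟫_𝕜 = 0
  · exact ⟨1, norm_one, by simp [h]⟩
  refine ⟨⟪y, x⟫_𝕜 / ‖⟪y, x⟫_𝕜‖, by simp [norm_div, h], ?_⟩
  have : (‖⟪y, x⟫_𝕜‖ : 𝕜) ≠ 0 := by simpa using h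
  rw [inner_smul_left, map_div₀, RCLike.conj_ofReal, div_mul_eq_mul_div, RCLike.conj_mul]
  field_simp

theorem norm_inner_map_self_sub_le_sqrt (O : E →L[𝕜] E) {x y : E} (hx : ‖x‖ = 1) (hy : ‖y‖ = 1) :
    ‖⟪x, O x⟫_𝕜 - ⟪y, O y⟫_𝕜‖ ≤ 2 * √2 * ‖O‖ * √(1 - ‖⟪y, x⟫_𝕜‖) := by
  obtain ⟨c, hc, hcyx⟩ := exists_norm_eq_one_inner_smul_eq_norm (𝕜 := 𝕜) x y
  have hcy : ‖c • y‖ = 1 := by rw [norm_smul, hc, hy, one_mul]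
  have hexp : ⟪c • y, O (c • y)⟫_𝕜 = ⟪y, O y⟫_𝕜 := by
    rw [map_smul, inner_smul_left, inner_smul_right, ← mul_assoc, RCLike.conj_mul, hc]
    simp
  have hdist : ‖x - c • y‖ = √2 * √(1 - ‖⟪y, x⟫_𝕜‖) := by
    rw [← Real.sqrt_mul zero_le_two, ← Real.sqrt_sq (norm_nonneg _), norm_sub_sq (𝕜 := 𝕜), hx, hcy,
      ← inner_conj_symm, RCLike.conj_re, hcyx, RCLike.ofReal_re]
    ring_nf
  calc ‖⟪x, O x⟫_𝕜 - ⟪y, O y⟫_𝕜‖ = ‖⟪x, O x⟫_𝕜 - ⟪c • y, O (c • y)⟫_𝕜‖ := by rw [hexp]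
    _ ≤ 2 * ‖O‖ * ‖x - c • y‖ := norm_inner_map_self_sub_le O hx hcy
    _ = 2 * √2 * ‖O‖ * √(1 - ‖⟪y, x⟫_𝕜‖) := by rw [hdist]; ring

theorem norm_inner_map_self_div_sub_le_sqrt (O : E →L[𝕜] E) (x : E) {y : E} (hy : ‖y‖ = 1) :
    ‖⟪x, O x⟫_𝕜 / (‖x‖ : 𝕜) ^ 2 - ⟪y, O y⟫_𝕜‖ ≤ 2 * √2 * ‖O‖ * √(1 - ‖⟪y, x⟫_𝕜‖ / ‖x‖) := by
  rcases eq_or_ne x 0 with rfl | hx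
  -- junk values: at `x = 0` both quotients are `0`
  · rw [inner_zero_left, zero_div, zero_sub, norm_neg, inner_zero_right, norm_zero, norm_zero,
      div_zero, sub_zero, Real.sqrt_one, mul_one]
    have h2 : 1 ≤ 2 * √2 := by nlinarith [Real.sqrt_nonneg 2, Real.sq_sqrt zero_le_two]
    calc ‖⟪y, O y⟫_𝕜‖ ≤ ‖y‖ * (‖O‖ * ‖y‖) :=
          (norm_inner_le_norm _ _).trans (by gcongr; exact O.le_opNorm y)
      _ = ‖O‖ := by rw [hy, one_mul, mul_one]
      _ ≤ 2 * √2 * ‖O‖ := le_mul_of_one_le_left (norm_nonneg O) h2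
  have hx' : (‖x‖ : 𝕜) ≠ 0 := by simpa using hx
  have hunit : ‖(‖x‖⁻¹ : 𝕜) • x‖ = 1 := by
    rw [norm_smul, norm_inv, RCLike.norm_ofReal, abs_norm,
      inv_mul_cancel₀ (norm_ne_zero_iff.mpr hx)]
  convert norm_inner_map_self_sub_le_sqrt O hunit hy using 4
  · rw [map_smul, inner_smul_left, inner_smul_right, map_inv₀, RCLike.conj_ofReal]
    field_simp
  · rw [inner_smul_right, norm_mul, norm_inv, RCLike.norm_ofReal, abs_norm, div_eq_inv_mul]

end InnerProductSpace

namespace LinearMap.IsSymmetric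

variable {𝕜 E : Type*} [RCLike 𝕜] [NormedAddCommGroup E] [InnerProductSpace 𝕜 E]
  {T : E →ₗ[𝕜] E} (hT : T.IsSymmetric)

include hT in
theorem inner_eq_zero_of_apply_eq_smul {u v : E} {μ ν : ℝ} (hu : T u = (μ : 𝕜) • u)
    (hv : T v = (ν : 𝕜) • v) (hμν : μ ≠ ν) : ⟪v, u⟫_𝕜 = 0 := by
  have h := hT u v
  rw [hu, hv, inner_smul_left, inner_smul_right, RCLike.conj_ofReal] at h
  have hsub : ((μ : 𝕜) - ν) * ⟪u, v⟫_𝕜 = 0 := by rw [sub_mul, h, sub_self]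
  rw [inner_eq_zero_symm]
  exact (mul_eq_zero.mp hsub).resolve_left (sub_ne_zero.mpr (by exact_mod_cast hμν))

section Spectral

variable [FiniteDimensional 𝕜 E] {n : ℕ} (hn : Module.finrank 𝕜 E = n)
include hT hn

theorem repr_pow_apply (x : E) (k : ℕ) (i : Fin n) :
    (hT.eigenvectorBasis hn).repr ((T ^ k) x) i =
      (hT.eigenvalues hn i : 𝕜) ^ k * (hT.eigenvectorBasis hn).repr x i := by
  induction k with
  | zero => simp
  | succ k ih =>
    rw [pow_succ', Module.End.mul_apply, eigenvectorBasis_apply_self_apply, ih, pow_succ', mul_assoc]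

theorem norm_pow_apply_sq_le {x : E} {c : ℝ}
    (hc : ∀ i, ⟪hT.eigenvectorBasis hn i, x⟫_𝕜 ≠ 0 → |hT.eigenvalues hn i| ≤ c) (k : ℕ) :
    ‖(T ^ k) x‖ ^ 2 ≤ c ^ (2 * k) * ‖x‖ ^ 2 := by
  set b := hT.eigenvectorBasis hn
  rw [← b.sum_sq_norm_inner_right, ← b.sum_sq_norm_inner_right, Finset.mul_sum]
  refine Finset.sum_le_sum fun i _ => ?_
  rw [← b.repr_apply_apply, repr_pow_apply, b.repr_apply_apply, norm_mul, mul_pow, norm_pow,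
    RCLike.norm_ofReal, ← pow_mul, mul_comm k]
  by_cases hi : ⟪b i, x⟫_𝕜 = 0
  · simp [hi]
  · gcongr
    exact hc i hi

end Spectral

variable {v : E} {E₀ E₁ : ℝ} (hv : ‖v‖ = 1) (hTv : T v = (E₀ : 𝕜) • v) (hE : E₀ < E₁)
  (hgap : ∀ (μ : ℝ) (w : E), w ≠ 0 → T w = (μ : 𝕜) • w → ⟪v, w⟫_𝕜 = 0 → E₁ ≤ μ ∧ μ < 0)
include hv

include hTv in
theorem pow_apply_eq_pow_smul (k : ℕ) : (T ^ k) v = (E₀ : 𝕜) ^ k • v :=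
  Module.End.HasEigenvector.pow_apply ⟨Module.End.mem_eigenspace_iff.mpr hTv,
    norm_ne_zero_iff.mp (by rw [hv]; exact one_ne_zero)⟩ k

include hT hTv in
theorem inner_pow_apply (ψ : E) (k : ℕ) : ⟪v, (T ^ k) ψ⟫_𝕜 = (E₀ : 𝕜) ^ k * ⟪v, ψ⟫_𝕜 := by
  rw [← hT.pow k, pow_apply_eq_pow_smul hv hTv, inner_smul_left, map_pow, RCLike.conj_ofReal]

include hTv hE hgap in
theorem eq_inner_smul_of_apply_eq_smul {x : E} (hx : T x = (E₀ : 𝕜) • x) : x = ⟪v, x⟫_𝕜 • v := by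
  by_contra hne
  have hw : T (x - ⟪v, x⟫_𝕜 • v) = (E₀ : 𝕜) • (x - ⟪v, x⟫_𝕜 • v) := by
    rw [map_sub, map_smul, hx, hTv, smul_sub, smul_comm]
  linarith [(hgap E₀ _ (sub_ne_zero.mpr hne) hw (inner_sub_inner_smul_eq_zero hv x)).1]

variable [FiniteDimensional 𝕜 E]

include hT hTv hE hgap in
theorem abs_eigenvalues_le {n : ℕ} (hn : Module.finrank 𝕜 E = n) {w : E} (hw : ⟪v, w⟫_𝕜 = 0)
    (i : Fin n) (hi : ⟪hT.eigenvectorBasis hn i, w⟫_𝕜 ≠ 0) : |hT.eigenvalues hn i| ≤ |E₁| := by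
  set b := hT.eigenvectorBasis hn
  have hbi := hT.apply_eigenvectorBasis hn i
  by_cases hμ : hT.eigenvalues hn i = E₀
  · rw [hμ] at hbi
    rw [eq_inner_smul_of_apply_eq_smul hv hTv hE hgap hbi, inner_smul_left, hw, mul_zero] at hi
    exact (hi rfl).elim
  · obtain ⟨h₁, h₀⟩ := hgap _ (b i) (b.orthonormal.ne_zero i) hbi
      (hT.inner_eq_zero_of_apply_eq_smul hbi hTv hμ)
    rw [abs_of_neg h₀, abs_of_neg (h₁.trans_lt h₀)]
    linarith

include hT hTv hE hgap in
theorem norm_pow_apply_sq_le_of_inner_eq_zero {w : E} (hw : ⟪v, w⟫_𝕜 = 0) (k : ℕ) :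
    ‖(T ^ k) w‖ ^ 2 ≤ E₁ ^ (2 * k) * ‖w‖ ^ 2 := by
  rw [← (even_two_mul k).pow_abs]
  exact hT.norm_pow_apply_sq_le rfl (hT.abs_eigenvalues_le hv hTv hE hgap rfl hw) k

include hT hTv hE hgap in
theorem one_sub_norm_inner_pow_apply_div_le {ψ : E} (hψ : ‖ψ‖ = 1)
    (hψv : ⟪v, ψ⟫_𝕜 ≠ 0) (hE₀ : E₀ ≠ 0) (k : ℕ) :
    1 - ‖⟪v, (T ^ k) ψ⟫_𝕜‖ / ‖(T ^ k) ψ‖ ≤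
      (1 - ‖⟪v, ψ⟫_𝕜‖ ^ 2) / (2 * ‖⟪v, ψ⟫_𝕜‖ ^ 2) * (E₁ / E₀) ^ (2 * k) := by
  set w := ψ - ⟪v, ψ⟫_𝕜 • v
  have hinner := hT.inner_pow_apply hv hTv ψ k
  have hTkw : (T ^ k) ψ - ⟪v, (T ^ k) ψ⟫_𝕜 • v = (T ^ k) w := by
    rw [map_sub, map_smul, pow_apply_eq_pow_smul hv hTv, hinner, smul_smul, mul_comm]
  have hnorm : ‖(T ^ k) ψ‖ ^ 2 = ‖⟪v, (T ^ k) ψ⟫_𝕜‖ ^ 2 + ‖(T ^ k) w‖ ^ 2 := by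
    rw [← hTkw]
    exact norm_sq_eq_norm_inner_sq_add_norm_sub_sq hv _
  have hw : ‖w‖ ^ 2 = 1 - ‖⟪v, ψ⟫_𝕜‖ ^ 2 := by
    have h := norm_sq_eq_norm_inner_sq_add_norm_sub_sq (𝕜 := 𝕜) hv ψ
    rw [hψ, one_pow] at h
    linarith
  have hA : 0 < ‖⟪v, (T ^ k) ψ⟫_𝕜‖ := by
    simpa [hinner, hψv] using pow_pos (abs_pos.mpr hE₀) k
  calc 1 - ‖⟪v, (T ^ k) ψ⟫_𝕜‖ / ‖(T ^ k) ψ‖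
      ≤ ‖(T ^ k) w‖ ^ 2 / (2 * ‖⟪v, (T ^ k) ψ⟫_𝕜‖ ^ 2) :=
        one_sub_div_le_div_sq hA (sq_nonneg _) (norm_nonneg _) hnorm
    _ ≤ E₁ ^ (2 * k) * (1 - ‖⟪v, ψ⟫_𝕜‖ ^ 2) / (2 * ‖⟪v, (T ^ k) ψ⟫_𝕜‖ ^ 2) := by
        rw [← hw]
        gcongr
        exact hT.norm_pow_apply_sq_le_of_inner_eq_zero hv hTv hE hgap
          (inner_sub_inner_smul_eq_zero hv ψ) k
    _ = (1 - ‖⟪v, ψ⟫_𝕜‖ ^ 2) / (2 * ‖⟪v, ψ⟫_𝕜‖ ^ 2) * (E₁ / E₀) ^ (2 * k) := by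
        rw [hinner, norm_mul, norm_pow, RCLike.norm_ofReal, div_pow,
          ← (even_two_mul k).pow_abs E₀]
        have : ‖⟪v, ψ⟫_𝕜‖ ≠ 0 := norm_ne_zero_iff.mpr hψv
        have : |E₀| ≠ 0 := abs_ne_zero.mpr hE₀
        field_simp
        ring

include hT hTv hE hgap in
theorem norm_inner_map_pow_apply_div_sub_le (O : E →L[𝕜] E) {ψ : E} (hψ : ‖ψ‖ = 1)
    (hψv : ⟪v, ψ⟫_𝕜 ≠ 0) (hE₀ : E₀ ≠ 0) (k : ℕ) :
    ‖⟪(T ^ k) ψ, O ((T ^ k) ψ)⟫_𝕜 / (‖(T ^ k) ψ‖ : 𝕜) ^ 2 - ⟪v, O v⟫_𝕜‖ ≤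
      2 * √2 * ‖O‖ * √((1 - ‖⟪v, ψ⟫_𝕜‖ ^ 2) / (2 * ‖⟪v, ψ⟫_𝕜‖ ^ 2) * (E₁ / E₀) ^ (2 * k)) := by
  refine (norm_inner_map_self_div_sub_le_sqrt O _ hv).trans ?_
  gcongr
  exact hT.one_sub_norm_inner_pow_apply_div_le hv hTv hE hgap hψ hψv hE₀ k

end LinearMap.IsSymmetric

namespace Matrix

theorem star_dotProduct_eq_inner {𝕜 n : Type*} [RCLike 𝕜] [Fintype n] (x y : n → 𝕜) :
    star x ⬝ᵥ y = ⟪WithLp.toLp 2 x, WithLp.toLp 2 y⟫_𝕜 := by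
  rw [EuclideanSpace.inner_toLp_toLp, dotProduct_comm]

theorem star_dotProduct_pow_mul_mul_pow_mulVec {α n : Type*} [Semiring α] [StarRing α]
    [Fintype n] [DecidableEq n] {H : Matrix n n α} (hH : H.IsHermitian) (O : Matrix n n α)
    (ψ : n → α) (k : ℕ) :
    star ψ ⬝ᵥ (H ^ k * O * H ^ k) *ᵥ ψ = star (H ^ k *ᵥ ψ) ⬝ᵥ O *ᵥ (H ^ k *ᵥ ψ) := by
  rw [← mulVec_mulVec, ← mulVec_mulVec, dotProduct_mulVec, star_mulVec, (hH.pow k).eq]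

end Matrix

theorem vecNorm_eq_norm_toLp {n : Type*} [Fintype n] (x : n → ℂ) :
    vecNorm x = ‖WithLp.toLp 2 x‖ := by
  rw [vecNorm, norm_eq_sqrt_re_inner (𝕜 := ℂ), star_dotProduct_eq_inner]
  rfl

theorem pow_two_mul_le_of_log_div_log_le {q X : ℝ} {k : ℕ} (hq₀ : 0 < q) (hq₁ : q < 1)
    (hX : 0 < X) (hk : 1 / 2 * Real.log X / Real.log q ≤ k) : q ^ (2 * k) ≤ X := by
  rw [div_le_iff_of_neg (Real.log_neg hq₀ hq₁)] at hk
  rw [← Real.log_le_log_iff (pow_pos hq₀ _) hX, Real.log_pow]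
  push_cast
  linarith

theorem div_pow_two_mul_le_of_log_div_log_le {E₀ E₁ Δ X : ℝ} {k : ℕ} (hE₀ : E₀ < 0)
    (hE₁ : E₁ < 0) (hΔpos : 0 < Δ) (hΔ : Δ ≤ E₁ - E₀) (hX : 0 < X)
    (hk : 1 / 2 * Real.log X / Real.log (1 - Δ / |E₀|) ≤ k) : (E₁ / E₀) ^ (2 * k) ≤ X := by
  have hE₀abs : |E₀| = -E₀ := abs_of_neg hE₀
  have hq : |E₁ / E₀| ≤ 1 - Δ / |E₀| := by
    rw [abs_div, abs_of_neg hE₁, hE₀abs, one_sub_div (by linarith)]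
    exact div_le_div_of_nonneg_right (by linarith) (by linarith)
  refine ((even_two_mul k).pow_abs (E₁ / E₀) ▸ pow_le_pow_left₀ (abs_nonneg _) hq _).trans ?_
  refine pow_two_mul_le_of_log_div_log_le ?_ ?_ hX hk
  · rw [sub_pos, div_lt_one (by linarith), hE₀abs]
    linarith
  · linarith [div_pos hΔpos (abs_pos.mpr hE₀.ne)]

theorem pos_and_one_sub_sq_pos_of_le_mul_sqrt_div {a γ ε : ℝ} (ha : 0 ≤ a) (hγ : 0 < γ)
    (hε : 0 < ε) (h : ε ≤ 4 * a * √(1 - γ ^ 2) / γ) : 0 < a ∧ 0 < 1 - γ ^ 2 := by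
  have hpos : 0 < 4 * a * √(1 - γ ^ 2) := (div_pos_iff_of_pos_right hγ).mp (hε.trans_le h)
  exact ⟨ha.lt_of_ne fun h => by simp [← h] at hpos,
    Real.sqrt_pos.mp <| (Real.sqrt_nonneg _).lt_of_ne fun h => by simp [← h] at hpos⟩

theorem two_mul_sqrt_two_mul_sqrt_le {a γ ε r : ℝ} (ha : 0 < a) (hε : 0 ≤ ε) (hγ : 0 < γ)
    (hγ₁ : 0 < 1 - γ ^ 2) (hr : r ≤ 2 * γ ^ 2 * ε ^ 2 / (8 * a ^ 2 * (1 - γ ^ 2))) :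
    2 * √2 * a * √((1 - γ ^ 2) / (2 * γ ^ 2) * r) ≤ ε := by
  have h8 : (8 : ℝ) = (2 * √2) ^ 2 := by rw [mul_pow, Real.sq_sqrt zero_le_two]; norm_num
  have hr' : (1 - γ ^ 2) / (2 * γ ^ 2) * r ≤ (ε / (2 * √2 * a)) ^ 2 := by
    calc (1 - γ ^ 2) / (2 * γ ^ 2) * r
        ≤ (1 - γ ^ 2) / (2 * γ ^ 2) * (2 * γ ^ 2 * ε ^ 2 / (8 * a ^ 2 * (1 - γ ^ 2))) := by
          gcongr
      _ = (ε / (2 * √2 * a)) ^ 2 := by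
          rw [h8]
          field_simp
  calc 2 * √2 * a * √((1 - γ ^ 2) / (2 * γ ^ 2) * r)
      ≤ 2 * √2 * a * √((ε / (2 * √2 * a)) ^ 2) := by gcongr
    _ = ε := by
        rw [Real.sqrt_sq (by positivity)]
        field_simp

/-- power method for ground state property estimation: for Hermitian H with
negative spectrum, ground eigenvalue E₀ < E₁ < 0, gap Δ ≤ E₁ − E₀, ground eigenvector v,
trial overlap γ > 0, observable O, and ε ≤ 4‖O‖√(1−γ²)/γ, if
k ≥ (1/2)·log(2γ²ε²/(8‖O‖²(1−γ²)))/log(1 − Δ/|E₀|) then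
|⟨ψ₀|H^k O H^k|ψ₀⟩/‖H^k ψ₀‖² − ⟨E₀|O|E₀⟩| ≤ ε. -/
theorem stmt_14 {N : ℕ} (H : Matrix (Fin N) (Fin N) ℂ) (hH : H.IsHermitian)
    (O : Matrix (Fin N) (Fin N) ℂ)
    (E₀ E₁ Δ γ ε : ℝ) (hE₀ : E₀ < 0) (hE₁ : E₁ < 0) (hE₀₁ : E₀ < E₁)
    (hΔpos : 0 < Δ) (hΔ : Δ ≤ E₁ - E₀)
    (v : Fin N → ℂ) (hv : vecNorm v = 1) (hEv : H.mulVec v = (E₀ : ℂ) • v)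
    (hgap : ∀ (μ : ℝ) (w : Fin N → ℂ), w ≠ 0 → H.mulVec w = (μ : ℂ) • w →
      star v ⬝ᵥ w = 0 → E₁ ≤ μ ∧ μ < 0)
    (ψ₀ : Fin N → ℂ) (hψ₀ : vecNorm ψ₀ = 1)
    (hγ : γ = ‖star v ⬝ᵥ ψ₀‖) (hγpos : 0 < γ)
    (hε : 0 < ε) (hεub : ε ≤ 4 * ‖O‖ * Real.sqrt (1 - γ ^ 2) / γ)
    (k : ℕ)
    (hk : (1 / 2) * Real.log (2 * γ ^ 2 * ε ^ 2 / (8 * ‖O‖ ^ 2 * (1 - γ ^ 2)))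
            / Real.log (1 - Δ / |E₀|) ≤ (k : ℝ)) :
    ‖(star ψ₀ ⬝ᵥ (H ^ k * O * H ^ k).mulVec ψ₀)
        / ((vecNorm ((H ^ k).mulVec ψ₀) : ℝ) : ℂ) ^ 2
      - star v ⬝ᵥ O.mulVec v‖ ≤ ε := by
  obtain ⟨hO, hγ₁⟩ := pos_and_one_sub_sq_pos_of_le_mul_sqrt_div (norm_nonneg O) hγpos hε hεub
  set T := toEuclideanLin H
  have hTv : T (WithLp.toLp 2 v) = (E₀ : ℂ) • WithLp.toLp 2 v := by
    rw [toLpLin_toLp]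
    exact congrArg (WithLp.toLp 2) hEv
  have hgap' : ∀ (μ : ℝ) (w : EuclideanSpace ℂ (Fin N)), w ≠ 0 → T w = (μ : ℂ) • w →
      ⟪WithLp.toLp 2 v, w⟫_ℂ = 0 → E₁ ≤ μ ∧ μ < 0 := fun μ w hw hTw hvw =>
    hgap μ w.ofLp (by simpa using hw) (congrArg WithLp.ofLp hTw)
      (by rwa [star_dotProduct_eq_inner])
  have hφ : WithLp.toLp 2 (H ^ k *ᵥ ψ₀) = (T ^ k) (WithLp.toLp 2 ψ₀) := by
    rw [← toLpLin_pow, toLpLin_toLp]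
    rfl
  rw [star_dotProduct_eq_inner] at hγ
  rw [vecNorm_eq_norm_toLp] at hv hψ₀
  rw [star_dotProduct_pow_mul_mul_pow_mulVec hH, star_dotProduct_eq_inner, star_dotProduct_eq_inner,
    vecNorm_eq_norm_toLp, ← toEuclideanCLM_toLp O, ← toEuclideanCLM_toLp O, hφ]
  calc _ ≤ 2 * √2 * ‖O‖ * √((1 - γ ^ 2) / (2 * γ ^ 2) * (E₁ / E₀) ^ (2 * k)) := by
        rw [l2_opNorm_def O, hγ]
        exact (isSymmetric_toEuclideanLin_iff.mpr hH).norm_inner_map_pow_apply_div_sub_le hv hTv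
          hE₀₁ hgap' _ hψ₀ (norm_pos_iff.mp (hγ ▸ hγpos)) hE₀.ne k
    _ ≤ ε := two_mul_sqrt_two_mul_sqrt_le hO hε.le hγpos hγ₁
        (div_pow_two_mul_le_of_log_div_log_le hE₀ hE₁ hΔpos hΔ (by positivity) hk)
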